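/- arXiv:0812.3433 — 3 statements merged into one kernel-verified Lean document; each statement's English description precedes it below -/
import Mathlib

section
/- Let G be a group and let H be a subgroup of G containing the commutator subgroup [G,G]. Let B = G/(H·Z(G)), where Z(G) is the center of G. Then [H,G] is a normal subgroup of [G,G] with abelian quotient, and there is a surjective group homomorphism from the exterior square B ∧ B onto [G,G]/[H,G], sending (a·H·Z(G)) ∧ (b·H·Z(G)) to the class of aba^{-1}b^{-1} modulo [H,G]. -/
open scoped commutatorElement

/-!
Since `[G,G] ≤ H`, every commutator of `G` is central modulo `N = [H,G]`, so in `G/N` the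
commutator map is bimultiplicative; it is trivial as soon as one argument lies in `H` (by the
definition of `N`) or in `Z(G)`. Hence `(a, b) ↦ [a,b]` descends to an alternating
bimultiplicative pairing on `B = G/(H·Z(G))` with values in `[G,G]/[H,G]`, a subgroup of `G/N`.
The universal property of `⋀²` turns the pairing into a linear map, which is onto because the
commutators generate `[G,G]`.
-/

open Subgroup

theorem normal_of_commutator_le {G : Type*} [Group G] {H : Subgroup G}
    (hH : commutator G ≤ H) : H.Normal where
  conj_mem h hh g := by
    have := H.mul_mem (hH (commutator_mem_commutator (mem_top g) (mem_top h))) hh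
    rwa [← conj_eq_commutatorElement_mul, MulAut.conj_apply] at this

theorem closure_preimage_commutatorSet_eq_top (G : Type*) [Group G] :
    closure ((commutator G).subtype ⁻¹' commutatorSet G) = ⊤ := by
  have h := closure_preimage_eq_top (commutatorSet G)
  rwa [← commutator_eq_closure] at h

section CentralCommutators

variable {P : Type*} [Group P]

theorem commutatorElement_mul_left_of_mem_center {x y z : P} (h : ⁅y, z⁆ ∈ center P) :
    ⁅x * y, z⁆ = ⁅x, z⁆ * ⁅y, z⁆ := by
  rw [commutatorElement_mul_left_eq_conj_mul, mem_center_iff.mp h x, mul_inv_cancel_right,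
    mem_center_iff.mp h]

theorem commutatorElement_mul_right_of_mem_center {x y z : P} (h : ⁅x, z⁆ ∈ center P) :
    ⁅x, y * z⁆ = ⁅x, y⁆ * ⁅x, z⁆ := by
  rw [commutatorElement_mul_right_eq_mul_conj, mul_assoc _ y, mem_center_iff.mp h y, ← mul_assoc,
    mul_inv_cancel_right]

theorem commutatorElement_eq_one_of_mem_center_left {s : P} (hs : s ∈ center P) (y : P) :
    ⁅s, y⁆ = 1 :=
  commutatorElement_eq_one_iff_mul_comm.mpr (mem_center_iff.mp hs y).symm

theorem commutatorElement_eq_one_of_mem_center_right {s : P} (hs : s ∈ center P) (x : P) :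
    ⁅x, s⁆ = 1 :=
  commutatorElement_eq_one_iff_mul_comm.mpr (mem_center_iff.mp hs x)

end CentralCommutators

namespace QuotientGroup

variable {G : Type*} [Group G] (N K : Subgroup G) [N.Normal]

def mapSubgroupOf : K ⧸ N.subgroupOf K →* G ⧸ N :=
  map (N.subgroupOf K) N K.subtype le_rfl

theorem mapSubgroupOf_mk (k : K) : mapSubgroupOf N K k = ((k : G) : G ⧸ N) :=
  rfl

theorem mapSubgroupOf_injective : Function.Injective (mapSubgroupOf N K) := by
  refine (injective_iff_map_eq_one _).mpr fun x hx => ?_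
  induction x using QuotientGroup.induction_on with
  | H k =>
    rw [mapSubgroupOf_mk, eq_one_iff] at hx
    exact (eq_one_iff k).mpr hx

end QuotientGroup

namespace exteriorPower

variable {B Q : Type*} [CommGroup B] [CommGroup Q] (β : B → B → Q)
  (hmul_left : ∀ x y z, β (x * y) z = β x z * β y z)
  (hmul_right : ∀ x y z, β x (y * z) = β x y * β x z) (hself : ∀ x, β x x = 1)

def alternatingMapOfBimultiplicative : Additive B [⋀^Fin 2]→ₗ[ℤ] Additive Q where
  toFun v := Additive.ofMul (β (v 0).toMul (v 1).toMul)
  map_update_add' m i x y := by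
    fin_cases i
    · simp [hmul_left]
    · simp [hmul_right]
  map_update_smul' m i c x := by
    fin_cases i
    · simpa using congrArg Additive.ofMul
        (map_zpow (MonoidHom.mk' (β · (m 1).toMul) (hmul_left · · _)) x.toMul c)
    · simpa using congrArg Additive.ofMul
        (map_zpow (MonoidHom.mk' (β (m 0).toMul) (hmul_right _)) x.toMul c)
  map_eq_zero_of_eq' v i j hv hij := by
    fin_cases i <;> fin_cases j
    all_goals simp_all

noncomputable def liftBimultiplicative : ⋀[ℤ]^2 (Additive B) →ₗ[ℤ] Additive Q :=
  alternatingMapLinearEquiv (alternatingMapOfBimultiplicative β hmul_left hmul_right hself)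

theorem liftBimultiplicative_ιMulti (a b : B) :
    liftBimultiplicative β hmul_left hmul_right hself
        (ιMulti ℤ 2 ![Additive.ofMul a, Additive.ofMul b]) = Additive.ofMul (β a b) :=
  alternatingMapLinearEquiv_apply_ιMulti _ _

theorem liftBimultiplicative_surjective (hβ : closure (Set.range (Function.uncurry β)) = ⊤) :
    Function.Surjective (liftBimultiplicative β hmul_left hmul_right hself) := by
  let R : Subgroup Q := AddSubgroup.toSubgroup'
    (LinearMap.range (liftBimultiplicative β hmul_left hmul_right hself)).toAddSubgroup
  have hR : closure (Set.range (Function.uncurry β)) ≤ R := by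
    rw [closure_le]
    rintro _ ⟨⟨a, b⟩, rfl⟩
    exact ⟨_, liftBimultiplicative_ιMulti β hmul_left hmul_right hself a b⟩
  rw [hβ] at hR
  exact fun q => hR (mem_top q.toMul)

end exteriorPower

section CommutatorPairing

variable {G : Type*} [Group G] (N : Subgroup G) [N.Normal]

def commutatorClass (a b : G) : commutator G ⧸ N.subgroupOf (commutator G) :=
  (⟨⁅a, b⁆, commutator_mem_commutator (mem_top a) (mem_top b)⟩ : commutator G)

theorem mapSubgroupOf_commutatorClass (a b : G) :
    QuotientGroup.mapSubgroupOf N (commutator G) (commutatorClass N a b) =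
      ⁅(a : G ⧸ N), (b : G ⧸ N)⁆ :=
  map_commutatorElement (QuotientGroup.mk' N) a b

theorem closure_range_commutatorClass :
    closure (Set.range (Function.uncurry (commutatorClass N))) = ⊤ := by
  have hrange : Set.range (Function.uncurry (commutatorClass N)) =
      QuotientGroup.mk' _ '' ((commutator G).subtype ⁻¹' commutatorSet G) := by
    ext q
    constructor
    · rintro ⟨⟨a, b⟩, rfl⟩
      exact ⟨_, ⟨a, b, rfl⟩, rfl⟩
    · rintro ⟨x, ⟨a, b, hx⟩, rfl⟩
      exact ⟨(a, b), congrArg _ (Subtype.ext hx)⟩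
  rw [hrange, ← MonoidHom.map_closure, closure_preimage_commutatorSet_eq_top,
    ← MonoidHom.range_eq_map, QuotientGroup.range_mk']

variable {N} {H : Subgroup G}

theorem mk_mem_center_of_mem_sup_center (hHN : ⁅H, ⊤⁆ ≤ N) {g : G} (hg : g ∈ H ⊔ center G) :
    (g : G ⧸ N) ∈ center (G ⧸ N) := by
  have hle : H ⊔ center G ≤ Subgroup.upperCentralSeriesStep N :=
    sup_le (fun h hh y => hHN (commutator_mem_commutator hh (mem_top y)))
      fun z hz y => (commutatorElement_eq_one_of_mem_center_left hz y).symm ▸ one_mem N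
  rw [Subgroup.upperCentralSeriesStep_eq_comap_center] at hle
  exact hle hg

theorem commutatorElement_mk_mem_center (hH : commutator G ≤ H) (hHN : ⁅H, ⊤⁆ ≤ N)
    (a b : G) : ⁅(a : G ⧸ N), (b : G ⧸ N)⁆ ∈ center (G ⧸ N) :=
  mk_mem_center_of_mem_sup_center hHN
    (mem_sup_left (hH (commutator_mem_commutator (mem_top a) (mem_top b))))

theorem commutatorClass_mul_left (hH : commutator G ≤ H) (hHN : ⁅H, ⊤⁆ ≤ N) (a₁ a₂ b : G) :
    commutatorClass N (a₁ * a₂) b = commutatorClass N a₁ b * commutatorClass N a₂ b := by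
  apply QuotientGroup.mapSubgroupOf_injective N (commutator G)
  rw [map_mul, mapSubgroupOf_commutatorClass, mapSubgroupOf_commutatorClass,
    mapSubgroupOf_commutatorClass, QuotientGroup.mk_mul]
  exact commutatorElement_mul_left_of_mem_center (commutatorElement_mk_mem_center hH hHN a₂ b)

theorem commutatorClass_mul_right (hH : commutator G ≤ H) (hHN : ⁅H, ⊤⁆ ≤ N) (a b₁ b₂ : G) :
    commutatorClass N a (b₁ * b₂) = commutatorClass N a b₁ * commutatorClass N a b₂ := by
  apply QuotientGroup.mapSubgroupOf_injective N (commutator G)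
  rw [map_mul, mapSubgroupOf_commutatorClass, mapSubgroupOf_commutatorClass,
    mapSubgroupOf_commutatorClass, QuotientGroup.mk_mul]
  exact commutatorElement_mul_right_of_mem_center (commutatorElement_mk_mem_center hH hHN a b₂)

theorem commutatorClass_eq_one_of_mem_left (hHN : ⁅H, ⊤⁆ ≤ N) {s : G}
    (hs : s ∈ H ⊔ center G) (b : G) : commutatorClass N s b = 1 := by
  apply QuotientGroup.mapSubgroupOf_injective N (commutator G)
  rw [map_one, mapSubgroupOf_commutatorClass]
  exact commutatorElement_eq_one_of_mem_center_left (mk_mem_center_of_mem_sup_center hHN hs) _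

theorem commutatorClass_eq_one_of_mem_right (hHN : ⁅H, ⊤⁆ ≤ N) {s : G}
    (hs : s ∈ H ⊔ center G) (a : G) : commutatorClass N a s = 1 := by
  apply QuotientGroup.mapSubgroupOf_injective N (commutator G)
  rw [map_one, mapSubgroupOf_commutatorClass]
  exact commutatorElement_eq_one_of_mem_center_right (mk_mem_center_of_mem_sup_center hHN hs) _

variable (N)

def commutatorPairing (hH : commutator G ≤ H) (hHN : ⁅H, ⊤⁆ ≤ N) :
    G ⧸ (H ⊔ center G) → G ⧸ (H ⊔ center G) → commutator G ⧸ N.subgroupOf (commutator G) :=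
  Quotient.lift₂ (commutatorClass N) fun a₁ b₁ a₂ b₂ ha hb => by
    replace ha : a₁⁻¹ * a₂ ∈ H ⊔ center G := QuotientGroup.leftRel_apply.mp ha
    replace hb : b₁⁻¹ * b₂ ∈ H ⊔ center G := QuotientGroup.leftRel_apply.mp hb
    rw [← mul_inv_cancel_left a₁ a₂, ← mul_inv_cancel_left b₁ b₂,
      commutatorClass_mul_left hH hHN a₁, commutatorClass_eq_one_of_mem_left hHN ha,
      commutatorClass_mul_right hH hHN a₁ b₁, commutatorClass_eq_one_of_mem_right hHN hb,
      mul_one, mul_one]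

variable (hH : commutator G ≤ H) (hHN : ⁅H, ⊤⁆ ≤ N)

theorem commutatorPairing_self (x : G ⧸ (H ⊔ center G)) :
    commutatorPairing N hH hHN x x = 1 := by
  induction x using QuotientGroup.induction_on with
  | H a => exact congrArg _ (Subtype.ext (commutatorElement_self a))

theorem closure_range_commutatorPairing :
    closure (Set.range (Function.uncurry (commutatorPairing N hH hHN))) = ⊤ :=
  top_le_iff.mp <| closure_range_commutatorClass N ▸
    closure_mono (Set.range_subset_iff.mpr fun ab => ⟨(ab.1, ab.2), rfl⟩)

variable [(H ⊔ center G).Normal]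

theorem commutatorPairing_mul_left (x y z : G ⧸ (H ⊔ center G)) :
    commutatorPairing N hH hHN (x * y) z =
      commutatorPairing N hH hHN x z * commutatorPairing N hH hHN y z := by
  obtain ⟨a, rfl⟩ := QuotientGroup.mk_surjective x
  obtain ⟨b, rfl⟩ := QuotientGroup.mk_surjective y
  obtain ⟨c, rfl⟩ := QuotientGroup.mk_surjective z
  exact commutatorClass_mul_left hH hHN a b c

theorem commutatorPairing_mul_right (x y z : G ⧸ (H ⊔ center G)) :
    commutatorPairing N hH hHN x (y * z) =
      commutatorPairing N hH hHN x y * commutatorPairing N hH hHN x z := by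
  obtain ⟨a, rfl⟩ := QuotientGroup.mk_surjective x
  obtain ⟨b, rfl⟩ := QuotientGroup.mk_surjective y
  obtain ⟨c, rfl⟩ := QuotientGroup.mk_surjective z
  exact commutatorClass_mul_right hH hHN a b c

end CommutatorPairing

/-- Let `G` be a group and `H` a subgroup with `[G,G] ≤ H`, and let
`B = G/(H·Z(G))`.  Then `[H,G]` is a normal subgroup of `[G,G]` with abelian quotient, and
there is a surjective group homomorphism `B ∧ B → [G,G]/[H,G]` sending
`a∧b ↦ [a,b] mod [H,G]`.  (The quotients are abelian, so the exterior square is taken of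
the corresponding `ℤ`-modules; the normality and commutativity facts used to form the
quotient groups are recorded as the—automatically satisfiable—hypotheses of part (2).) -/
theorem exterior_square_epi_onto_commutator_quotient
    {G : Type} [Group G] (H : Subgroup G) (hH : commutator G ≤ H) :
    -- (1) `[H,G]` is a normal subgroup of `[G,G]` with abelian quotient
    (∀ g ∈ commutator G, ∀ x ∈ ⁅H, (⊤ : Subgroup G)⁆,
        g * x * g⁻¹ ∈ ⁅H, (⊤ : Subgroup G)⁆) ∧
    (∀ a ∈ commutator G, ∀ b ∈ commutator G, ⁅a, b⁆ ∈ ⁅H, (⊤ : Subgroup G)⁆) ∧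
    -- (2) the surjection `B ∧ B → [G,G]/[H,G]`, `a ∧ b ↦ [a,b]`
    (∀ (hN : (H ⊔ Subgroup.center G).Normal),
      letI := hN
      ∀ (hcommB : ∀ x y : G ⧸ (H ⊔ Subgroup.center G), x * y = y * x),
      letI : CommGroup (G ⧸ (H ⊔ Subgroup.center G)) :=
        { (inferInstance : Group (G ⧸ (H ⊔ Subgroup.center G))) with mul_comm := hcommB }
      ∀ (hnorm2 : ((⁅H, (⊤ : Subgroup G)⁆).subgroupOf (commutator G)).Normal),
      letI := hnorm2
      ∀ (hcommQ : ∀ x y : (commutator G) ⧸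
          ((⁅H, (⊤ : Subgroup G)⁆).subgroupOf (commutator G)), x * y = y * x),
      letI : CommGroup ((commutator G) ⧸
          ((⁅H, (⊤ : Subgroup G)⁆).subgroupOf (commutator G))) :=
        { (inferInstance : Group _) with mul_comm := hcommQ }
      ∃ f : (⋀[ℤ]^2 (Additive (G ⧸ (H ⊔ Subgroup.center G)))) →ₗ[ℤ]
          (Additive ((commutator G) ⧸ ((⁅H, (⊤ : Subgroup G)⁆).subgroupOf (commutator G)))),
        Function.Surjective f ∧
        ∀ (a b : G) (hab : ⁅a, b⁆ ∈ commutator G),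
          f ⟨ExteriorAlgebra.ιMulti ℤ 2
                ![Additive.ofMul (QuotientGroup.mk a), Additive.ofMul (QuotientGroup.mk b)],
              ExteriorAlgebra.ιMulti_range ℤ 2 (Set.mem_range_self _)⟩
            = Additive.ofMul (QuotientGroup.mk (⟨⁅a, b⁆, hab⟩ : commutator G))) := by
  have := normal_of_commutator_le hH
  refine ⟨fun g _ x hx => (commutator_normal H ⊤).conj_mem x hx g,
    fun a ha b _ => commutator_mem_commutator (hH ha) (mem_top b), ?_⟩
  intro _ hcommB _ hcommQ
  -- the statement inlines its `letI` instances; name them so the lemmas on `CommGroup`s apply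
  let : CommGroup (G ⧸ (H ⊔ center G)) := { (inferInstance : Group _) with mul_comm := hcommB }
  let : CommGroup (commutator G ⧸ (⁅H, (⊤ : Subgroup G)⁆.subgroupOf (commutator G))) :=
    { (inferInstance : Group _) with mul_comm := hcommQ }
  have hmul_left := commutatorPairing_mul_left ⁅H, ⊤⁆ hH le_rfl
  have hmul_right := commutatorPairing_mul_right ⁅H, ⊤⁆ hH le_rfl
  have hself := commutatorPairing_self ⁅H, ⊤⁆ hH le_rfl
  exact ⟨_, exteriorPower.liftBimultiplicative_surjective _ hmul_left hmul_right hself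
      (closure_range_commutatorPairing ⁅H, ⊤⁆ hH le_rfl),
    fun a b _ => exteriorPower.liftBimultiplicative_ιMulti _ hmul_left hmul_right hself a b⟩
end

section
/- Let E be a graded division ring (graded by a torsion-free abelian group) finite-dimensional over its center T, a graded field. If E is totally ramified over T (i.e., E_0 = T_0), then SK1(E) ≅ μ_n(T_0)/μ_e(T_0), where n = ind(E), e is the exponent of the finite abelian group Γ_E/Γ_T, and μ_k(T_0) denotes the group of k-th roots of unity in the field T_0. -/
open scoped TensorProduct

universe u v

/-- A witness that `nrd` is the reduced norm of the (Azumaya) `R`-algebra `A` of constant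
rank `n ^ 2`. -/
structure RedNormWitness (R : Type u) (A : Type v) [CommRing R] [Ring A] [Algebra R A]
    (n : ℕ) (nrd : A →* R) : Type (max (u + 1) (v + 1)) where
  S : Type v
  [commRing : CommRing S]
  [alg : Algebra R S]
  faithfullyFlat : Module.FaithfullyFlat R S
  equiv : (S ⊗[R] A) ≃ₐ[S] Matrix (Fin n) (Fin n) S
  compat : ∀ a : A, algebraMap R S (nrd a) = Matrix.det (equiv ((1 : S) ⊗ₜ[R] a))

/-- `nrd` is the reduced norm of the `R`-algebra `A` (of degree `n`). -/
def IsReducedNorm (R : Type u) (A : Type v) [CommRing R] [Ring A] [Algebra R A]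
    (n : ℕ) (nrd : A →* R) : Prop :=
  Nonempty (RedNormWitness R A n nrd)

/-- A graded division ring: every nonzero homogeneous element is a unit. -/
def IsGradedDivisionRing {Γ E : Type*} [AddCommGroup Γ] [Ring E]
    (𝒜 : Γ → AddSubgroup E) : Prop :=
  ∀ γ : Γ, ∀ a ∈ 𝒜 γ, a ≠ 0 → IsUnit a

/-- The reduced Whitehead group `SK₁` attached to a multiplicative map `nrd` (a reduced
norm): the kernel of `nrd` on units modulo the commutator subgroup of the unit group. -/
def skOne {E R : Type*} [Monoid E] [CommMonoid R] (nrd : E →* R) : Type _ :=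
  (Units.map nrd).ker ⧸ (commutator Eˣ).subgroupOf (Units.map nrd).ker

noncomputable instance {E R : Type*} [Monoid E] [CommMonoid R] (nrd : E →* R) :
    Group (skOne nrd) := by
  unfold skOne
  haveI := Subgroup.Normal.subgroupOf (H := commutator Eˣ)
    inferInstance ((Units.map nrd).ker)
  infer_instance

/-!
A torsion-free abelian group has unique sums, so in `E` the product of two nonzero elements has a
nonzero component in a uniquely attained degree. Hence `E` has no zero divisors and every unit is
homogeneous; in particular commutators of units have degree `0`, so they are central (`E₀ = T₀`)
and the commutator pairing is bimultiplicative. A unit `u` has central `m`-th power iff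
`m • deg u ∈ Γ_T`, so `e` is the least `m` killing all commutators: `[E*, E*]` is a subgroup of
`μ_e(T)` of order divisible by `e`, hence equal to it. If `Nrd u = 1`, then `u ^ e = t` is central
with `t ^ n = Nrd (u ^ e) = 1`, so `u` has finite order, degree `0`, lies in `T₀` and satisfies
`u ^ n = Nrd u = 1`; thus `E⁽¹⁾ = μ_n(T₀)` and `SK₁(E) = μ_n(T₀)/μ_e(T₀)`.
-/

open DirectSum Finset
open scoped commutatorElement

instance IsAddTorsionFree.toTwoUniqueSums (Γ : Type*) [AddCommGroup Γ] [IsAddTorsionFree Γ] :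
    TwoUniqueSums Γ :=
  TwoUniqueSums.of_injective_addHom (DivisibleHull.coeAddMonoidHom Γ).toAddHom
    DivisibleHull.coe_injective inferInstance

theorem commutatorElement_pow_left {G : Type*} [Group G] {a b : G} (h : Commute a ⁅a, b⁆)
    (k : ℕ) : ⁅a ^ k, b⁆ = ⁅a, b⁆ ^ k := by
  induction k with
  | zero => simp
  | succ k ih =>
    rw [pow_succ, commutatorElement_mul_left_eq_conj_mul, (h.pow_left k).mul_inv_cancel, ih,
      pow_succ']

section CentralCommutators

variable {G : Type*} [Group G] (hcomm : ∀ a b : G, ⁅a, b⁆ ∈ Subgroup.center G)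
include hcomm

theorem forall_pow_mem_center_iff_of_commutator_mem_center (m : ℕ) :
    (∀ g : G, g ^ m ∈ Subgroup.center G) ↔ ∀ a b : G, ⁅a, b⁆ ^ m = 1 := by
  have hpow (a b : G) : ⁅a ^ m, b⁆ = ⁅a, b⁆ ^ m :=
    commutatorElement_pow_left (Subgroup.mem_center_iff.mp (hcomm a b) a) m
  simp_rw [Subgroup.mem_center_iff, ← hpow, commutatorElement_eq_one_iff_mul_comm, eq_comm]

theorem commutator_eq_of_forall_pow_mem_center {e : ℕ} {M : Subgroup G} [Finite M]
    (hM : ∀ g, g ∈ M ↔ g ∈ Subgroup.center G ∧ g ^ e = 1) (hcard : Nat.card M ≤ e)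
    (hpow : ∀ g : G, g ^ e ∈ Subgroup.center G)
    (hmin : ∀ m, 0 < m → (∀ g : G, g ^ m ∈ Subgroup.center G) → e ∣ m) :
    commutator G = M := by
  have hle : commutator G ≤ M := by
    rw [commutator_def, Subgroup.commutator_le]
    exact fun a _ b _ ↦ (hM _).mpr
      ⟨hcomm a b, (forall_pow_mem_center_iff_of_commutator_mem_center hcomm e).mp hpow a b⟩
  have : Finite (commutator G) := Finite.of_injective _ (Subgroup.inclusion_injective hle)
  have hdvd : e ∣ Nat.card (commutator G) := by
    refine hmin _ Nat.card_pos ((forall_pow_mem_center_iff_of_commutator_mem_center hcomm _).mpr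
      fun a b ↦ ?_)
    have hmem : ⁅a, b⁆ ∈ commutator G := commutator_def G ▸
      Subgroup.commutator_mem_commutator (Subgroup.mem_top a) (Subgroup.mem_top b)
    exact Subtype.ext_iff.mp (pow_card_eq_one' (G := commutator G) (x := ⟨_, hmem⟩))
  exact Subgroup.eq_of_le_of_card_ge hle (hcard.trans (Nat.le_of_dvd Nat.card_pos hdvd))

end CentralCommutators

noncomputable def QuotientGroup.equivQuotientSubgroupOfOfMapEq {G H : Type*} [Group G] [Group H]
    {φ : G →* H} (hφ : Function.Injective φ) {A B : Subgroup G} {K C : Subgroup H}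
    (hA : A.map φ = K) (hB : B.map φ = C) [(B.subgroupOf A).Normal] [(C.subgroupOf K).Normal] :
    A ⧸ B.subgroupOf A ≃* K ⧸ C.subgroupOf K := by
  subst hA hB
  refine QuotientGroup.congr _ _ (A.equivMapOfInjective φ hφ) ?_
  ext ⟨_, a, haA, rfl⟩
  simpa [Subgroup.mem_subgroupOf, Subtype.ext_iff, hφ.eq_iff] using fun _ ↦ haA

namespace IsReducedNorm

variable {R A : Type*} [CommRing R] [Ring A] [Algebra R A] {n : ℕ} {nrd : A →* R}

theorem pos [Nontrivial A] (h : IsReducedNorm R A n nrd) : 0 < n := by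
  obtain ⟨w⟩ := h
  let := w.commRing; let := w.alg; have := w.faithfullyFlat
  have : Nontrivial (w.S ⊗[R] A) := Module.FaithfullyFlat.lTensor_nontrivial R w.S A
  refine Nat.pos_of_ne_zero fun hn ↦ ?_
  subst hn
  exact not_subsingleton _ w.equiv.toEquiv.subsingleton

theorem map_algebraMap (h : IsReducedNorm R A n nrd) (r : R) :
    nrd (algebraMap R A r) = r ^ n := by
  obtain ⟨w⟩ := h
  let := w.commRing; let := w.alg; have := w.faithfullyFlat
  apply FaithfulSMul.algebraMap_injective R w.S
  have hscalar : (1 : w.S) ⊗ₜ[R] algebraMap R A r = algebraMap w.S _ (algebraMap R w.S r) := by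
    rw [Algebra.TensorProduct.algebraMap_apply, Algebra.algebraMap_self_apply,
      Algebra.algebraMap_eq_smul_one, TensorProduct.tmul_smul, TensorProduct.smul_tmul',
      ← Algebra.algebraMap_eq_smul_one]
  rw [w.compat, hscalar, AlgEquiv.commutes, Algebra.algebraMap_eq_smul_one, Matrix.det_smul,
    Matrix.det_one, mul_one, Fintype.card_fin, map_pow]

theorem units_map_map_algebraMap (h : IsReducedNorm R A n nrd) (z : Rˣ) :
    Units.map nrd (Units.map (algebraMap R A : R →* A) z) = z ^ n :=
  Units.ext (by simp [h.map_algebraMap])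

end IsReducedNorm

section CenterUnits

variable (E : Type*) [Ring E]

def unitsCenterHom : (Subring.center E)ˣ →* Eˣ :=
  Units.map (algebraMap (Subring.center E) E : Subring.center E →* E)

variable {E}

theorem unitsCenterHom_injective : Function.Injective (unitsCenterHom E) :=
  fun _ _ h ↦ Units.ext (Subtype.ext (congrArg Units.val h))

theorem mem_range_unitsCenterHom {u : Eˣ} :
    u ∈ (unitsCenterHom E).range ↔ (u : E) ∈ Subring.center E := by
  refine ⟨fun ⟨z, hz⟩ ↦ hz ▸ (z : Subring.center E).2, fun hu ↦ ?_⟩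
  exact ⟨⟨⟨u, hu⟩, ⟨_, Set.units_inv_mem_center hu⟩, Subtype.ext u.mul_inv,
    Subtype.ext u.inv_mul⟩, rfl⟩

theorem mem_map_rootsOfUnity_iff {k : ℕ} {u : Eˣ} :
    u ∈ (rootsOfUnity k (Subring.center E)).map (unitsCenterHom E) ↔
      (u : E) ∈ Subring.center E ∧ u ^ k = 1 := by
  constructor
  · rintro ⟨z, hz, rfl⟩
    exact ⟨(z : Subring.center E).2, by rw [← map_pow, (mem_rootsOfUnity k z).mp hz, map_one]⟩
  · rintro ⟨hu, hk⟩
    obtain ⟨z, rfl⟩ := mem_range_unitsCenterHom.mpr hu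
    refine ⟨z, (mem_rootsOfUnity k z).mpr (unitsCenterHom_injective ?_), rfl⟩
    rw [map_pow, hk, map_one]

end CenterUnits

section Graded

variable {Γ E : Type*} [AddCommGroup Γ] [DecidableEq Γ] [Ring E] {𝒜 : Γ → AddSubgroup E}
  [GradedRing 𝒜]

theorem inv_mem_graded_neg {u : Eˣ} {γ : Γ} (hu : (u : E) ∈ 𝒜 γ) :
    ((u⁻¹ : Eˣ) : E) ∈ 𝒜 (-γ) := by
  -- The `(-γ)`-component of `u⁻¹` is already a right inverse of `u`.
  have hright : (u : E) * decompose 𝒜 (u⁻¹ : Eˣ) (-γ) = 1 := by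
    rw [← coe_decompose_mul_add_of_left_mem 𝒜 hu, Units.mul_inv, add_neg_cancel,
      decompose_of_mem_same 𝒜 SetLike.GradedOne.one_mem]
  rw [← mul_one ((u⁻¹ : Eˣ) : E), ← hright, ← mul_assoc, Units.inv_mul, one_mul]
  exact SetLike.coe_mem _

theorem support_decompose_nonempty [∀ (i : Γ) (x : 𝒜 i), Decidable (x ≠ 0)] {x : E}
    (hx : x ≠ 0) : (decompose 𝒜 x).support.Nonempty := by
  rw [Finset.nonempty_iff_ne_empty, Ne, DFinsupp.support_eq_empty]
  exact fun h ↦ hx ((decompose 𝒜).injective (h.trans (decompose_zero 𝒜).symm))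

theorem coe_decompose_mul_of_uniqueAdd [∀ (i : Γ) (x : 𝒜 i), Decidable (x ≠ 0)] {x y : E}
    {a b : Γ} (h : UniqueAdd (decompose 𝒜 x).support (decompose 𝒜 y).support a b) :
    (decompose 𝒜 (x * y) (a + b) : E) = decompose 𝒜 x a * decompose 𝒜 y b := by
  rw [decompose_mul, coe_mul_apply (A := 𝒜)]
  refine Finset.sum_eq_single (a, b) ?_ ?_
  · rintro ⟨a', b'⟩ hp hne
    simp only [Finset.mem_filter, Finset.mem_product] at hp
    exact absurd (Prod.ext_iff.mpr (h hp.1.1 hp.1.2 hp.2)) hne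
  · intro hab
    simp only [Finset.mem_filter, Finset.mem_product, DFinsupp.mem_support_iff, and_true,
      not_and_or, not_not] at hab
    rcases hab with ha | hb
    · simp [ha]
    · simp [hb]

namespace IsGradedDivisionRing

variable (hgd : IsGradedDivisionRing 𝒜)
include hgd

theorem coe_decompose_mul_ne_zero [∀ (i : Γ) (x : 𝒜 i), Decidable (x ≠ 0)] {x y : E} {a b : Γ}
    (ha : a ∈ (decompose 𝒜 x).support) (hb : b ∈ (decompose 𝒜 y).support)
    (h : UniqueAdd (decompose 𝒜 x).support (decompose 𝒜 y).support a b) :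
    (decompose 𝒜 (x * y) (a + b) : E) ≠ 0 := by
  rw [DFinsupp.mem_support_iff, ne_eq, ← Subtype.coe_inj, ZeroMemClass.coe_zero] at ha hb
  rw [coe_decompose_mul_of_uniqueAdd h]
  exact mt (hgd a _ (SetLike.coe_mem _) ha).mul_right_eq_zero.mp hb

theorem noZeroDivisors [UniqueSums Γ] : NoZeroDivisors E := by
  classical
  refine ⟨fun {x y} hxy ↦ ?_⟩
  by_contra! ⟨hx, hy⟩
  obtain ⟨a, ha, b, hb, hab⟩ := UniqueSums.uniqueAdd_of_nonempty
    (support_decompose_nonempty (𝒜 := 𝒜) hx) (support_decompose_nonempty (𝒜 := 𝒜) hy)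
  exact hgd.coe_decompose_mul_ne_zero ha hb hab (by simp [hxy])

-- Two distinct uniquely attained degrees of `u * u⁻¹ = 1` would both have to be `0`.
theorem isHomogeneousElem_unit [TwoUniqueSums Γ] [Nontrivial E] (u : Eˣ) :
    SetLike.IsHomogeneousElem 𝒜 (u : E) := by
  classical
  set A := (decompose 𝒜 (u : E)).support
  set B := (decompose 𝒜 ((u⁻¹ : Eˣ) : E)).support
  have hsum : ∀ p ∈ A ×ˢ B, UniqueAdd A B p.1 p.2 → p.1 + p.2 = 0 := by
    intro p hp hu
    rw [Finset.mem_product] at hp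
    by_contra hne
    apply hgd.coe_decompose_mul_ne_zero hp.1 hp.2 hu
    rw [Units.mul_inv, decompose_of_mem_ne 𝒜 SetLike.GradedOne.one_mem (Ne.symm hne)]
  have hcard : #A * #B ≤ 1 := by
    by_contra! h
    obtain ⟨p, hp, q, hq, hpq, hpu, hqu⟩ := TwoUniqueSums.uniqueAdd_of_one_lt_card h
    have hq' := mem_product.mp hq
    exact hpq (Prod.ext_iff.mpr (hpu hq'.1 hq'.2 (by rw [hsum q hq hqu, hsum p hp hpu]))).symm
  have hB : 0 < #B := (support_decompose_nonempty (Units.ne_zero _)).card_pos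
  obtain ⟨a, ha⟩ := card_eq_one.mp <| le_antisymm ((Nat.le_mul_of_pos_right _ hB).trans hcard)
    (support_decompose_nonempty (Units.ne_zero u)).card_pos
  refine ⟨a, ?_⟩
  rw [← sum_support_decompose 𝒜 (u : E), show (decompose 𝒜 (u : E)).support = {a} from ha,
    sum_singleton]
  exact SetLike.coe_mem _

theorem mem_center_of_forall_commute {z : E} (hz : ∀ u : Eˣ, Commute z u) :
    z ∈ Subring.center E := by
  classical
  refine Subring.mem_center_iff.mpr fun x ↦ ?_
  rw [← sum_support_decompose 𝒜 x, Finset.sum_mul, Finset.mul_sum]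
  refine Finset.sum_congr rfl fun γ hγ ↦ ?_
  rw [DFinsupp.mem_support_iff, ne_eq, ← Subtype.coe_inj, ZeroMemClass.coe_zero] at hγ
  exact (hz (hgd γ _ (SetLike.coe_mem _) hγ).unit).symm.eq

theorem mem_center_units_iff (u : Eˣ) :
    u ∈ Subgroup.center Eˣ ↔ (u : E) ∈ Subring.center E := by
  refine ⟨fun hu ↦ hgd.mem_center_of_forall_commute fun v ↦ ?_, fun hu ↦ ?_⟩
  · exact Units.ext_iff.mp (Subgroup.mem_center_iff.mp hu v).symm
  · exact Subgroup.mem_center_iff.mpr fun v ↦ Units.ext (Subring.mem_center_iff.mp hu v)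

theorem mem_zero_of_pow_eq_one [IsAddTorsionFree Γ] [Nontrivial E] {u : Eˣ} {k : ℕ}
    (hk : k ≠ 0) (h : u ^ k = 1) : (u : E) ∈ 𝒜 0 := by
  obtain ⟨γ, hγ⟩ := hgd.isHomogeneousElem_unit u
  have hpow : (1 : E) ∈ 𝒜 (k • γ) := by
    simpa [← Units.val_pow_eq_pow_val, h] using SetLike.pow_mem_graded k hγ
  have hkγ : k • γ = 0 := degree_eq_of_mem_mem 𝒜 hpow SetLike.GradedOne.one_mem one_ne_zero
  rwa [(nsmul_eq_zero_iff_right hk).mp hkγ] at hγ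

theorem mem_zero_and_pow_eq_one_iff [IsAddTorsionFree Γ] [Nontrivial E] {k : ℕ} (hk : k ≠ 0)
    (z : (Subring.center E)ˣ) :
    ((z : Subring.center E) : E) ∈ 𝒜 0 ∧ z ^ k = 1 ↔ z ∈ rootsOfUnity k (Subring.center E) := by
  refine ⟨And.right, fun hz ↦ ⟨?_, hz⟩⟩
  refine hgd.mem_zero_of_pow_eq_one (u := unitsCenterHom E z) hk ?_
  rw [← map_pow, (mem_rootsOfUnity k z).mp hz, map_one]

end IsGradedDivisionRing

end Graded

section TotallyRamified

variable {Γ E : Type*} [AddCommGroup Γ] [DecidableEq Γ] [Ring E] {𝒜 : Γ → AddSubgroup E}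
  [GradedRing 𝒜]

namespace IsGradedDivisionRing

variable (hgd : IsGradedDivisionRing 𝒜) (htr : ∀ x : E, x ∈ 𝒜 0 → x ∈ Subring.center E)
include hgd htr

theorem mem_center_of_mem_of_mem_center {x y : E} {γ : Γ} (hx : x ∈ 𝒜 γ) (hx0 : x ≠ 0)
    (hxc : x ∈ Subring.center E) (hy : y ∈ 𝒜 γ) : y ∈ Subring.center E := by
  set u := (hgd γ x hx hx0).unit
  have hux : (u : E) = x := IsUnit.unit_spec _
  have h0 : y * ((u⁻¹ : Eˣ) : E) ∈ 𝒜 0 := by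
    have := SetLike.mul_mem_graded hy (inv_mem_graded_neg (hux.symm ▸ hx))
    rwa [add_neg_cancel] at this
  rw [← Units.inv_mul_cancel_right y u]
  exact Subring.mul_mem _ (htr _ h0) (hux.symm ▸ hxc)

theorem commutatorElement_mem_center [TwoUniqueSums Γ] [Nontrivial E] (u v : Eˣ) :
    ⁅u, v⁆ ∈ Subgroup.center Eˣ := by
  obtain ⟨γ, hγ⟩ := hgd.isHomogeneousElem_unit u
  obtain ⟨δ, hδ⟩ := hgd.isHomogeneousElem_unit v
  have h0 : ((⁅u, v⁆ : Eˣ) : E) ∈ 𝒜 0 := by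
    have := SetLike.mul_mem_graded (SetLike.mul_mem_graded (SetLike.mul_mem_graded hγ hδ)
      (inv_mem_graded_neg hγ)) (inv_mem_graded_neg hδ)
    rwa [show γ + δ + -γ + -δ = 0 by abel] at this
  exact (hgd.mem_center_units_iff _).mpr (htr _ h0)

theorem forall_pow_mem_center_iff [TwoUniqueSums Γ] [Nontrivial E] (m : ℕ) :
    (∀ u : Eˣ, u ^ m ∈ Subgroup.center Eˣ) ↔
      ∀ γ : Γ, (∃ x ∈ 𝒜 γ, x ≠ 0) → ∃ x ∈ 𝒜 (m • γ), x ≠ 0 ∧ x ∈ Subring.center E := by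
  simp_rw [hgd.mem_center_units_iff, Units.val_pow_eq_pow_val]
  constructor
  · rintro h γ ⟨x, hx, hx0⟩
    refine ⟨x ^ m, SetLike.pow_mem_graded m hx, ?_, ?_⟩
    · exact ((hgd γ x hx hx0).pow m).ne_zero
    · simpa using h (hgd γ x hx hx0).unit
  · intro h u
    obtain ⟨γ, hγ⟩ := hgd.isHomogeneousElem_unit u
    obtain ⟨x, hx, hx0, hxc⟩ := h γ ⟨u, hγ, Units.ne_zero u⟩
    exact hgd.mem_center_of_mem_of_mem_center htr hx hx0 hxc (SetLike.pow_mem_graded m hγ)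

theorem map_rootsOfUnity_eq_commutator [TwoUniqueSums Γ] [Nontrivial E] {e : ℕ} (he : 0 < e)
    (hpow : ∀ u : Eˣ, u ^ e ∈ Subgroup.center Eˣ)
    (hmin : ∀ m, 0 < m → (∀ u : Eˣ, u ^ m ∈ Subgroup.center Eˣ) → e ∣ m) :
    (rootsOfUnity e (Subring.center E)).map (unitsCenterHom E) = commutator Eˣ := by
  have := hgd.noZeroDivisors
  have := NoZeroDivisors.to_isDomain E
  have : NeZero e := ⟨he.ne'⟩
  have : Finite ((rootsOfUnity e (Subring.center E)).map (unitsCenterHom E)) :=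
    .of_equiv _ (Subgroup.equivMapOfInjective _ _ unitsCenterHom_injective).toEquiv
  refine (commutator_eq_of_forall_pow_mem_center (hgd.commutatorElement_mem_center htr)
    (fun u ↦ ?_) ?_ hpow hmin).symm
  · rw [mem_map_rootsOfUnity_iff, hgd.mem_center_units_iff]
  · rw [Subgroup.card_map_of_injective unitsCenterHom_injective]
    exact card_rootsOfUnity _ _

theorem map_rootsOfUnity_eq_ker [IsAddTorsionFree Γ] [Nontrivial E] {n e : ℕ}
    {nrd : E →* Subring.center E} (hnrd : IsReducedNorm (Subring.center E) E n nrd) (he : 0 < e)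
    (hpow : ∀ u : Eˣ, u ^ e ∈ Subgroup.center Eˣ) :
    (rootsOfUnity n (Subring.center E)).map (unitsCenterHom E) = (Units.map nrd).ker := by
  have hnrd_center : ∀ z, Units.map nrd (unitsCenterHom E z) = z ^ n :=
    hnrd.units_map_map_algebraMap
  ext u
  constructor
  · rintro ⟨z, hz, rfl⟩
    rw [MonoidHom.mem_ker, hnrd_center, (mem_rootsOfUnity n z).mp hz]
  · intro hu
    rw [MonoidHom.mem_ker] at hu
    obtain ⟨t, ht⟩ := mem_range_unitsCenterHom.mpr ((hgd.mem_center_units_iff _).mp (hpow u))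
    have hfin : u ^ (e * n) = 1 := by
      rw [pow_mul, ← ht, ← map_pow, ← hnrd_center, ht, map_pow, hu, one_pow, map_one]
    obtain ⟨z, rfl⟩ := mem_range_unitsCenterHom.mpr
      (htr _ (hgd.mem_zero_of_pow_eq_one (Nat.mul_ne_zero he.ne' hnrd.pos.ne') hfin))
    exact ⟨z, (mem_rootsOfUnity n z).mpr (by rw [← hnrd_center, hu]), rfl⟩

end IsGradedDivisionRing

end TotallyRamified

theorem nonempty_mulEquiv_of_subsingleton {G H : Type*} [Group G] [Group H] [Subsingleton G]
    [Subsingleton H] : Nonempty (G ≃* H) :=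
  let := uniqueOfSubsingleton (1 : G)
  let := uniqueOfSubsingleton (1 : H)
  ⟨MulEquiv.ofUnique⟩

theorem skOne_iso_of_totally_ramified_graded_division_ring_general
    {Γ : Type} [AddCommGroup Γ] [DecidableEq Γ] (htf : ∀ g : Γ, g ≠ 0 → ¬IsOfFinAddOrder g)
    {E : Type} [Ring E] (𝒜 : Γ → AddSubgroup E) [GradedRing 𝒜]
    (hgd : IsGradedDivisionRing 𝒜)
    (n : ℕ)
    (nrd : E →* Subring.center E) (hnrd : IsReducedNorm (Subring.center E) E n nrd)
    -- `E` is totally ramified over `T`: the degree-0 component lies in the center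
    (htr : ∀ x : E, x ∈ 𝒜 0 → x ∈ Subring.center E)
    -- `e` is the exponent of the (torsion) group `Γ_E/Γ_T`
    (e : ℕ) (he_pos : 0 < e)
    (he : ∀ γ : Γ, (∃ x ∈ 𝒜 γ, x ≠ 0) →
      ∃ x ∈ 𝒜 (e • γ), x ≠ 0 ∧ x ∈ Subring.center E)
    (he_min : ∀ m : ℕ, 0 < m →
      (∀ γ : Γ, (∃ x ∈ 𝒜 γ, x ≠ 0) →
        ∃ x ∈ 𝒜 (m • γ), x ≠ 0 ∧ x ∈ Subring.center E) → e ∣ m)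
    -- `μ_n(T₀)` and `μ_e(T₀)`: roots of unity in the degree-0 part of the center
    (Hn He : Subgroup (Subring.center E)ˣ)
    (hHn : ∀ u : (Subring.center E)ˣ, u ∈ Hn ↔
      (((u : Subring.center E) : E) ∈ 𝒜 0 ∧ u ^ n = 1))
    (hHe : ∀ u : (Subring.center E)ˣ, u ∈ He ↔
      (((u : Subring.center E) : E) ∈ 𝒜 0 ∧ u ^ e = 1)) :
    Nonempty (skOne nrd ≃* (Hn ⧸ He.subgroupOf Hn)) := by
  rcases subsingleton_or_nontrivial E with _ | _
  · have : Subsingleton (skOne nrd) := by unfold skOne; infer_instance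
    exact nonempty_mulEquiv_of_subsingleton
  have : IsAddTorsionFree Γ := isAddTorsionFree_iff_not_isOfFinAddOrder.mpr htf
  have hpow := (hgd.forall_pow_mem_center_iff htr e).mpr he
  have hmin m hm h := he_min m hm ((hgd.forall_pow_mem_center_iff htr m).mp h)
  obtain rfl : Hn = rootsOfUnity n (Subring.center E) :=
    Subgroup.ext fun z ↦ (hHn z).trans (hgd.mem_zero_and_pow_eq_one_iff hnrd.pos.ne' z)
  obtain rfl : He = rootsOfUnity e (Subring.center E) :=
    Subgroup.ext fun z ↦ (hHe z).trans (hgd.mem_zero_and_pow_eq_one_iff he_pos.ne' z)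
  exact ⟨(QuotientGroup.equivQuotientSubgroupOfOfMapEq unitsCenterHom_injective
    (hgd.map_rootsOfUnity_eq_ker htr hnrd he_pos hpow)
    (hgd.map_rootsOfUnity_eq_commutator htr he_pos hpow hmin)).symm⟩

/-- Let `E` be a graded division ring (graded by a torsion-free abelian
group), finite-dimensional over its center `T`.  If `E` is totally ramified over `T`
(`E₀ = T₀`), then `SK₁(E) ≅ μ_n(T₀)/μ_e(T₀)`, where `n = ind(E)` and `e` is the exponent
of `Γ_E/Γ_T`. -/
theorem skOne_iso_of_totally_ramified_graded_division_ring
    {Γ : Type} [AddCommGroup Γ] [DecidableEq Γ] (htf : ∀ g : Γ, g ≠ 0 → ¬IsOfFinAddOrder g)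
    {E : Type} [Ring E] (𝒜 : Γ → AddSubgroup E) [GradedRing 𝒜]
    (hgd : IsGradedDivisionRing 𝒜)
    [Module.Finite (Subring.center E) E]
    (n : ℕ) (hn : n * n = Module.finrank (Subring.center E) E)
    (nrd : E →* Subring.center E) (hnrd : IsReducedNorm (Subring.center E) E n nrd)
    -- `E` is totally ramified over `T`: the degree-0 component lies in the center
    (htr : ∀ x : E, x ∈ 𝒜 0 → x ∈ Subring.center E)
    -- `e` is the exponent of the (torsion) group `Γ_E/Γ_T`
    (e : ℕ) (he_pos : 0 < e)
    (he : ∀ γ : Γ, (∃ x ∈ 𝒜 γ, x ≠ 0) →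
      ∃ x ∈ 𝒜 (e • γ), x ≠ 0 ∧ x ∈ Subring.center E)
    (he_min : ∀ m : ℕ, 0 < m →
      (∀ γ : Γ, (∃ x ∈ 𝒜 γ, x ≠ 0) →
        ∃ x ∈ 𝒜 (m • γ), x ≠ 0 ∧ x ∈ Subring.center E) → e ∣ m)
    -- `μ_n(T₀)` and `μ_e(T₀)`: roots of unity in the degree-0 part of the center
    (Hn He : Subgroup (Subring.center E)ˣ)
    (hHn : ∀ u : (Subring.center E)ˣ, u ∈ Hn ↔
      (((u : Subring.center E) : E) ∈ 𝒜 0 ∧ u ^ n = 1))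
    (hHe : ∀ u : (Subring.center E)ˣ, u ∈ He ↔
      (((u : Subring.center E) : E) ∈ 𝒜 0 ∧ u ^ e = 1)) :
    Nonempty (skOne nrd ≃* (Hn ⧸ He.subgroupOf Hn)) :=
  skOne_iso_of_totally_ramified_graded_division_ring_general htf 𝒜 hgd n nrd hnrd htr e he_pos he
    he_min Hn He hHn hHe
end

section
/- Let F ⊆ K be fields with [K:F] < ∞, let v be a henselian valuation on F, and suppose K (with the unique extension of v) is defectless over F, i.e., [K:F] = [K̄:F̄]·|Γ_K:Γ_F|. Then for every a ∈ K*, the image of N_{K/F}(a) in the associated graded field gr(F) equals N_{gr(K)/gr(F)}(ã), where ã is the image of a in gr(K). -/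
open scoped TensorProduct

universe u v

set_option synthInstance.maxHeartbeats 1000000
set_option maxHeartbeats 2000000

/-- `v` is a valuation on the (division) ring `D`, written additively, with value group
a totally ordered abelian group `Γ` (and `v 0 = ⊤`). -/
structure IsValn {D : Type*} [Ring D] {Γ : Type*} [AddCommGroup Γ] [LinearOrder Γ] [IsOrderedAddMonoid Γ]
    (v : D → WithTop Γ) : Prop where
  map_zero : v 0 = ⊤
  ne_top : ∀ a : D, a ≠ 0 → v a ≠ ⊤
  map_one : v 1 = 0
  map_mul : ∀ a b : D, v (a * b) = v a + v b
  add_ge : ∀ a b : D, min (v a) (v b) ≤ v (a + b)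

/-- `(gD, 𝒟, tilde)` is the associated graded ring of the valuation `v` on `D`:
`tilde : D → gD` realizes, for `a ≠ 0`, the image of `a` in the quotient
`D^{≥ v(a)}/D^{> v(a)} = gD_{v(a)}`, and `gD` is generated by these images. -/
structure IsAssocGraded {D : Type*} [Ring D] {Γ : Type*} [AddCommGroup Γ] [LinearOrder Γ] [IsOrderedAddMonoid Γ]
    {gD : Type*} [Ring gD]
    (v : D → WithTop Γ) (𝒟 : Γ → AddSubgroup gD) (tilde : D → gD) : Prop where
  map_zero : tilde 0 = 0
  map_one : tilde 1 = 1
  map_mul : ∀ a b : D, tilde (a * b) = tilde a * tilde b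
  mem : ∀ (a : D) (γ : Γ), v a = (γ : WithTop Γ) → tilde a ∈ 𝒟 γ
  ne_zero : ∀ a : D, a ≠ 0 → tilde a ≠ 0
  eq_iff : ∀ a b : D, a ≠ 0 → b ≠ 0 → (tilde a = tilde b ↔ v b < v (a - b))
  surj : ∀ γ : Γ, ∀ x ∈ 𝒟 γ, x ≠ 0 → ∃ a : D, v a = (γ : WithTop Γ) ∧ tilde a = x
  add_of_eq : ∀ a b : D, v (a + b) = v a → v b = v a → tilde (a + b) = tilde a + tilde b
  add_of_lt : ∀ a b : D, v b = v a → v a < v (a + b) → tilde a + tilde b = 0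

/-!
Lift a homogeneous `gr(F)`-basis `ẽ₁, …, ẽₙ` of `gr(K)` (it exists because nonzero homogeneous
elements of `gr(F)` are invertible) to `e₁, …, eₙ ∈ K`. Linear independence of the `ẽᵢ` says that
`(eᵢ)` is a splitting family, `v(∑ cᵢ eᵢ) = minᵢ v(cᵢ eᵢ)`; in particular it is `F`-free, hence an
`F`-basis of `K` by defectlessness. For the matrix `C` of multiplication by `a` this gives
`v(Cᵢⱼ) ≥ v(a) + v(eⱼ) - v(eᵢ)`, and multiplication by `ã` has as matrix in the basis `(ẽᵢ)` the
degree `v(a) + v(eⱼ) - v(eᵢ)` parts of the `Cᵢⱼ`. In the permutation expansion of `det C` each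
term then has value at least `n·v(a)`, and the degree `n·v(a)` parts add up to the graded norm of
`ã`. That norm is a unit, so it is the leading term of `N_{K/F}(a) = det C`.
-/

theorem WithTop.coe_sub_le_of_le_add {Γ : Type*} [AddCommGroup Γ] [LinearOrder Γ]
    [IsOrderedAddMonoid Γ] {x : WithTop Γ} {a b : Γ} (h : (a : WithTop Γ) ≤ x + b) :
    ((a - b : Γ) : WithTop Γ) ≤ x := by
  rwa [← WithTop.add_le_add_iff_right WithTop.coe_ne_top, ← WithTop.coe_add, sub_add_cancel]

namespace IsValn

variable {D Γ : Type*} [Ring D] [AddCommGroup Γ] [LinearOrder Γ] [IsOrderedAddMonoid Γ]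
  {v : D → WithTop Γ}

def toAddValuation (hv : IsValn v) : AddValuation D (WithTop Γ) :=
  AddValuation.of v hv.map_zero hv.map_one hv.add_ge hv.map_mul

theorem map_neg (hv : IsValn v) (x : D) : v (-x) = v x :=
  hv.toAddValuation.map_neg x

theorem map_add_eq_of_lt_left (hv : IsValn v) {x y : D} (h : v x < v y) : v (x + y) = v x :=
  hv.toAddValuation.map_add_eq_of_lt_left h

theorem le_map_sum (hv : IsValn v) {ι : Type*} {s : Finset ι} {x : ι → D} {γ : WithTop Γ}
    (h : ∀ i ∈ s, γ ≤ v (x i)) : γ ≤ v (∑ i ∈ s, x i) :=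
  hv.toAddValuation.map_le_sum h

theorem map_units_zsmul (hv : IsValn v) (u : ℤˣ) (x : D) : v (u • x) = v x := by
  rcases Int.units_eq_one_or u with rfl | rfl
  · rw [one_smul]
  · rw [Units.neg_smul, one_smul, hv.map_neg]

theorem eq_zero_of_eq_top (hv : IsValn v) {x : D} (h : v x = ⊤) : x = 0 := by
  by_contra hx
  exact hv.ne_top x hx h

theorem ne_zero_of_eq_coe (hv : IsValn v) {x : D} {γ : Γ} (h : v x = γ) : x ≠ 0 := by
  rintro rfl
  rw [hv.map_zero] at h
  exact WithTop.top_ne_coe h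

theorem exists_eq_coe (hv : IsValn v) {x : D} (hx : x ≠ 0) : ∃ γ : Γ, v x = γ :=
  (WithTop.ne_top_iff_exists.mp (hv.ne_top x hx)).imp fun _ h => h.symm

theorem map_prod {D : Type*} [CommRing D] {v : D → WithTop Γ} (hv : IsValn v) {ι : Type*}
    (s : Finset ι) (x : ι → D) : v (∏ i ∈ s, x i) = ∑ i ∈ s, v (x i) := by
  classical
  induction s using Finset.induction_on with
  | empty => rw [Finset.prod_empty, Finset.sum_empty, hv.map_one]
  | insert i s hi ih => rw [Finset.prod_insert hi, Finset.sum_insert hi, hv.map_mul, ih]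

theorem sum_le_map_prod {D : Type*} [CommRing D] {v : D → WithTop Γ} (hv : IsValn v)
    {ι : Type*} {s : Finset ι} {x : ι → D} {β : ι → Γ} (h : ∀ i ∈ s, (β i : WithTop Γ) ≤ v (x i)) :
    ((∑ i ∈ s, β i : Γ) : WithTop Γ) ≤ v (∏ i ∈ s, x i) := by
  rw [hv.map_prod, WithTop.coe_sum]
  exact Finset.sum_le_sum h

end IsValn

namespace IsAssocGraded

variable {D Γ gD : Type*} [Ring D] [AddCommGroup Γ] [LinearOrder Γ] [IsOrderedAddMonoid Γ]
  [Ring gD] {v : D → WithTop Γ} {𝒟 : Γ → AddSubgroup gD} {tilde : D → gD}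

theorem map_neg (hv : IsValn v) (hgr : IsAssocGraded v 𝒟 tilde) (x : D) :
    tilde (-x) = -tilde x := by
  have h := hgr.add_of_lt 1 (-1) (hv.map_neg 1)
    (by rw [add_neg_cancel, hv.map_zero, hv.map_one]; exact WithTop.coe_lt_top 0)
  rw [hgr.map_one] at h
  rw [← neg_one_mul, hgr.map_mul, eq_neg_of_add_eq_zero_right h, neg_one_mul]

theorem map_add_of_lt (hv : IsValn v) (hgr : IsAssocGraded v 𝒟 tilde) {x y : D} (hx : x ≠ 0)
    (h : v x < v y) : tilde (x + y) = tilde x := by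
  have hxy : v (x + y) = v x := hv.map_add_eq_of_lt_left h
  refine (hgr.eq_iff _ _ (fun h0 => hv.ne_top x hx ?_) hx).mpr (by rwa [add_sub_cancel_left])
  rw [← hxy, h0, hv.map_zero]

theorem nontrivial [Nontrivial D] (hgr : IsAssocGraded v 𝒟 tilde) : Nontrivial gD :=
  ⟨1, 0, by rw [← hgr.map_one]; exact hgr.ne_zero 1 one_ne_zero⟩

end IsAssocGraded

section DegPart

variable {D Γ gD : Type*}

open Classical in
/-- For `γ ≤ v x`, the image of `x` in `D^{≥γ}/D^{>γ} = gD_γ`. -/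
noncomputable def degPart [Zero gD] (v : D → WithTop Γ) (tilde : D → gD) (γ : Γ) (x : D) : gD :=
  if v x = γ then tilde x else 0

section Zero

variable [Zero gD] {v : D → WithTop Γ} {tilde : D → gD} {γ : Γ} {x : D}

theorem degPart_of_eq (h : v x = γ) : degPart v tilde γ x = tilde x :=
  if_pos h

theorem degPart_of_ne (h : v x ≠ γ) : degPart v tilde γ x = 0 :=
  if_neg h

theorem eq_of_degPart_ne_zero (h : degPart v tilde γ x ≠ 0) : v x = γ := by
  by_contra hne
  exact h (degPart_of_ne hne)

theorem degPart_mem_of_mem {S : Type*} [SetLike S gD] [ZeroMemClass S gD] {s : S}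
    (h : tilde x ∈ s) : degPart v tilde γ x ∈ s := by
  by_cases hx : v x = γ
  · rwa [degPart_of_eq hx]
  · rw [degPart_of_ne hx]; exact zero_mem s

variable [Preorder Γ]

theorem degPart_of_lt (h : (γ : WithTop Γ) < v x) : degPart v tilde γ x = 0 :=
  degPart_of_ne h.ne'

end Zero

variable [Ring D] [AddCommGroup Γ] [LinearOrder Γ] [IsOrderedAddMonoid Γ] [Ring gD]
  {v : D → WithTop Γ} {𝒟 : Γ → AddSubgroup gD} {tilde : D → gD}

theorem degPart_zero (hv : IsValn v) (γ : Γ) : degPart v tilde γ 0 = 0 :=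
  degPart_of_ne (by rw [hv.map_zero]; exact WithTop.top_ne_coe)

namespace IsAssocGraded

theorem degPart_neg (hv : IsValn v) (hgr : IsAssocGraded v 𝒟 tilde) (γ : Γ) (x : D) :
    degPart v tilde γ (-x) = -degPart v tilde γ x := by
  by_cases h : v x = γ
  · rw [degPart_of_eq h, degPart_of_eq ((hv.map_neg x).trans h), hgr.map_neg hv]
  · rw [degPart_of_ne h, degPart_of_ne (by rwa [hv.map_neg]), neg_zero]

theorem degPart_units_zsmul (hv : IsValn v) (hgr : IsAssocGraded v 𝒟 tilde) (γ : Γ) (u : ℤˣ)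
    (x : D) : degPart v tilde γ (u • x) = u • degPart v tilde γ x := by
  rcases Int.units_eq_one_or u with rfl | rfl
  · rw [one_smul, one_smul]
  · rw [Units.neg_smul, one_smul, Units.neg_smul, one_smul, hgr.degPart_neg hv]

theorem degPart_add (hv : IsValn v) (hgr : IsAssocGraded v 𝒟 tilde) {γ : Γ} {x y : D}
    (hx : (γ : WithTop Γ) ≤ v x) (hy : (γ : WithTop Γ) ≤ v y) :
    degPart v tilde γ (x + y) = degPart v tilde γ x + degPart v tilde γ y := by
  have hxy : (γ : WithTop Γ) ≤ v (x + y) := (le_min hx hy).trans (hv.add_ge x y)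
  rcases hx.eq_or_lt with hx | hx <;> rcases hy.eq_or_lt with hy | hy
  · rw [degPart_of_eq hx.symm, degPart_of_eq hy.symm]
    rcases hxy.eq_or_lt with hxy | hxy
    · rw [degPart_of_eq hxy.symm, hgr.add_of_eq x y (hxy.symm.trans hx) (hy.symm.trans hx)]
    · rw [degPart_of_lt hxy, hgr.add_of_lt x y (hy.symm.trans hx) (hx ▸ hxy)]
  · rw [degPart_of_lt hy, add_zero, degPart_of_eq hx.symm,
      degPart_of_eq ((hv.map_add_eq_of_lt_left (hx ▸ hy)).trans hx.symm),
      hgr.map_add_of_lt hv (hv.ne_zero_of_eq_coe hx.symm) (hx ▸ hy)]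
  · rw [degPart_of_lt hx, zero_add, degPart_of_eq hy.symm, add_comm,
      degPart_of_eq ((hv.map_add_eq_of_lt_left (hy ▸ hx)).trans hy.symm),
      hgr.map_add_of_lt hv (hv.ne_zero_of_eq_coe hy.symm) (hy ▸ hx)]
  · rw [degPart_of_lt hx, degPart_of_lt hy,
      degPart_of_lt ((lt_min hx hy).trans_le (hv.add_ge x y)), add_zero]

theorem degPart_sum (hv : IsValn v) (hgr : IsAssocGraded v 𝒟 tilde) {γ : Γ} {ι : Type*}
    {s : Finset ι} {x : ι → D} (h : ∀ i ∈ s, (γ : WithTop Γ) ≤ v (x i)) :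
    degPart v tilde γ (∑ i ∈ s, x i) = ∑ i ∈ s, degPart v tilde γ (x i) := by
  classical
  induction s using Finset.induction_on with
  | empty => rw [Finset.sum_empty, Finset.sum_empty, degPart_zero hv]
  | insert i s hi ih =>
    rw [Finset.forall_mem_insert] at h
    rw [Finset.sum_insert hi, Finset.sum_insert hi, hgr.degPart_add hv h.1 (hv.le_map_sum h.2),
      ih h.2]

theorem degPart_mul (hv : IsValn v) (hgr : IsAssocGraded v 𝒟 tilde) {β γ : Γ} {x y : D}
    (hx : (β : WithTop Γ) ≤ v x) (hy : (γ : WithTop Γ) ≤ v y) :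
    degPart v tilde (β + γ) (x * y) = degPart v tilde β x * degPart v tilde γ y := by
  rcases hx.eq_or_lt with hx | hx
  · rcases hy.eq_or_lt with hy | hy
    · rw [degPart_of_eq hx.symm, degPart_of_eq hy.symm, ← hgr.map_mul,
        degPart_of_eq (by rw [hv.map_mul, ← hx, ← hy, WithTop.coe_add])]
    · rw [degPart_of_lt hy, mul_zero, degPart_of_lt]
      rw [hv.map_mul, WithTop.coe_add]
      exact WithTop.add_lt_add_of_le_of_lt WithTop.coe_ne_top hx.le hy
  · rw [degPart_of_lt hx, zero_mul, degPart_of_lt]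
    rw [hv.map_mul, WithTop.coe_add]
    exact WithTop.add_lt_add_of_lt_of_le WithTop.coe_ne_top hx hy

theorem degPart_mul_of_eq (hv : IsValn v) (hgr : IsAssocGraded v 𝒟 tilde) {μ δ : Γ} {x y : D}
    (hx : ((μ - δ : Γ) : WithTop Γ) ≤ v x) (hy : v y = δ) :
    degPart v tilde μ (x * y) = degPart v tilde (μ - δ) x * tilde y := by
  have h := hgr.degPart_mul hv hx hy.ge
  rwa [sub_add_cancel, degPart_of_eq hy] at h

theorem degPart_prod {D gD : Type*} [CommRing D] [CommRing gD] {v : D → WithTop Γ}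
    {𝒟 : Γ → AddSubgroup gD} {tilde : D → gD} (hv : IsValn v) (hgr : IsAssocGraded v 𝒟 tilde)
    {ι : Type*} {s : Finset ι} {x : ι → D} {β : ι → Γ}
    (h : ∀ i ∈ s, (β i : WithTop Γ) ≤ v (x i)) :
    degPart v tilde (∑ i ∈ s, β i) (∏ i ∈ s, x i) = ∏ i ∈ s, degPart v tilde (β i) (x i) := by
  classical
  induction s using Finset.induction_on with
  | empty =>
    rw [Finset.sum_empty, Finset.prod_empty, Finset.prod_empty, degPart_of_eq hv.map_one,
      hgr.map_one]
  | insert i s hi ih =>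
    rw [Finset.forall_mem_insert] at h
    rw [Finset.sum_insert hi, Finset.prod_insert hi, Finset.prod_insert hi,
      hgr.degPart_mul hv h.1 (hv.sum_le_map_prod h.2), ih h.2]

theorem degPart_det {D gD : Type*} [CommRing D] [CommRing gD] {v : D → WithTop Γ}
    {𝒟 : Γ → AddSubgroup gD} {tilde : D → gD} (hv : IsValn v) (hgr : IsAssocGraded v 𝒟 tilde)
    {ι : Type*} [Fintype ι] [DecidableEq ι] (A : Matrix ι ι D) (α : Γ) (w : ι → Γ)
    (hA : ∀ i j, ((α + w j - w i : Γ) : WithTop Γ) ≤ v (A i j)) :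
    degPart v tilde (Fintype.card ι • α) A.det =
      (Matrix.of fun i j => degPart v tilde (α + w j - w i) (A i j)).det := by
  have hweight : ∀ σ : Equiv.Perm ι, ∑ i, (α + w i - w (σ i)) = Fintype.card ι • α := by
    intro σ
    rw [Finset.sum_sub_distrib, Finset.sum_add_distrib, Equiv.sum_comp σ w, add_sub_cancel_right,
      Finset.sum_const, Finset.card_univ]
  have hterm : ∀ σ : Equiv.Perm ι, ∀ i ∈ Finset.univ,
      ((α + w i - w (σ i) : Γ) : WithTop Γ) ≤ v (A (σ i) i) := fun σ i _ => hA (σ i) i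
  rw [Matrix.det_apply, Matrix.det_apply, hgr.degPart_sum hv]
  · refine Finset.sum_congr rfl fun σ _ => ?_
    rw [hgr.degPart_units_zsmul hv, ← hweight σ, hgr.degPart_prod hv (hterm σ)]
    rfl
  · intro σ _
    rw [hv.map_units_zsmul, ← hweight σ]
    exact hv.sum_le_map_prod (hterm σ)

theorem decompose_tilde [DecidableEq Γ] [GradedRing 𝒟] (hv : IsValn v)
    (hgr : IsAssocGraded v 𝒟 tilde) (γ : Γ) (x : D) :
    (DirectSum.decompose 𝒟 (tilde x) γ : gD) = degPart v tilde γ x := by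
  classical
  by_cases hx : x = 0
  · rw [hx, hgr.map_zero, degPart_zero hv, DirectSum.decompose_zero]
    rfl
  obtain ⟨δ, hδ⟩ := hv.exists_eq_coe hx
  by_cases h : δ = γ
  · subst h
    rw [degPart_of_eq hδ, DirectSum.decompose_of_mem_same 𝒟 (hgr.mem x δ hδ)]
  · rw [degPart_of_ne (by rw [hδ]; exact_mod_cast h),
      DirectSum.decompose_of_mem_ne 𝒟 (hgr.mem x δ hδ) h]

end IsAssocGraded
end DegPart

section GradedDivisionSubring

open DirectSum Submodule

variable {Γ A : Type*} [AddCommGroup Γ] [DecidableEq Γ] [CommRing A] (𝒜 : Γ → AddSubgroup A)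
  [GradedRing 𝒜]

/-- The role of `gr(F)` inside `gr(K)`. -/
structure IsGradedDivisionSubring (R : Subring A) : Prop where
  decompose_mem : ∀ r ∈ R, ∀ γ, (decompose 𝒜 r γ : A) ∈ R
  exists_inv_mul : ∀ γ, ∀ r ∈ R, r ∈ 𝒜 γ → r ≠ 0 → ∃ s ∈ R, s * r = 1

variable {𝒜} {R : Subring A}

theorem IsGradedDivisionSubring.decompose_mem_span (hR : IsGradedDivisionSubring 𝒜 R) {ι : Type*}
    [Fintype ι] {b : ι → A} {γ : ι → Γ} (hb : ∀ i, b i ∈ 𝒜 (γ i)) {y : A}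
    (hy : y ∈ span R (Set.range b)) (δ : Γ) : (decompose 𝒜 y δ : A) ∈ span R (Set.range b) := by
  obtain ⟨c, rfl⟩ := (mem_span_range_iff_exists_fun R).mp hy
  rw [decompose_sum, DFinsupp.finsetSum_apply, AddSubgroup.val_finsetSum]
  refine sum_mem fun i _ => ?_
  rw [Subring.smul_def, smul_eq_mul, ← sub_add_cancel δ (γ i),
    coe_decompose_mul_add_of_right_mem 𝒜 (hb i)]
  exact smul_mem _ (⟨_, hR.decompose_mem _ (c i).2 _⟩ : R) (subset_span ⟨i, rfl⟩)

theorem IsGradedDivisionSubring.linearIndependent_finCons (hR : IsGradedDivisionSubring 𝒜 R)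
    {m : ℕ} {b : Fin m → A} {γ : Fin m → Γ} (hb : ∀ i, b i ∈ 𝒜 (γ i))
    (hind : LinearIndependent R b) {β : Γ} {z : A} (hz : z ∈ 𝒜 β)
    (hzb : z ∉ span R (Set.range b)) : LinearIndependent R (Fin.cons z b : Fin (m + 1) → A) := by
  classical
  refine hind.finCons' z b fun c y hy h => ?_
  by_contra hc
  obtain ⟨δ, hδ⟩ : ∃ δ, (decompose 𝒜 (c : A) δ : A) ≠ 0 := by
    by_contra! hall
    refine hc (Subtype.ext ((sum_support_decompose 𝒜 (c : A)).symm.trans ?_))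
    exact Finset.sum_eq_zero fun δ _ => hall δ
  obtain ⟨s, hs, hsc⟩ :=
    hR.exists_inv_mul δ _ (hR.decompose_mem c c.2 δ) (SetLike.coe_mem _) hδ
  have hproj : (decompose 𝒜 (c : A) δ : A) * z = -(decompose 𝒜 y (δ + β) : A) := by
    have h' := congrArg (fun x => (decompose 𝒜 x (δ + β) : A)) h
    simp only [Subring.smul_def, smul_eq_mul, decompose_add, DirectSum.add_apply,
      AddSubgroup.coe_add, coe_decompose_mul_add_of_right_mem 𝒜 hz, decompose_zero,
      DirectSum.zero_apply, ZeroMemClass.coe_zero] at h'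
    exact eq_neg_of_add_eq_zero_left h'
  refine hzb ?_
  have hz' : z = -((⟨s, hs⟩ : R) • (decompose 𝒜 y (δ + β) : A)) := by
    rw [Subring.smul_def, smul_eq_mul, ← mul_neg, ← hproj, ← mul_assoc, hsc, one_mul]
  rw [hz']
  exact neg_mem (smul_mem _ _ (hR.decompose_mem_span hb hy _))

theorem IsGradedDivisionSubring.exists_basis_homogeneous (hR : IsGradedDivisionSubring 𝒜 R)
    [Nontrivial A] (hrank : Module.rank R A < Cardinal.aleph0) :
    ∃ (m : ℕ) (b : Module.Basis (Fin m) R A) (γ : Fin m → Γ), ∀ i, b i ∈ 𝒜 (γ i) := by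
  classical
  let P : ℕ → Prop := fun m => ∃ (b : Fin m → A) (γ : Fin m → Γ),
    (∀ i, b i ∈ 𝒜 (γ i)) ∧ LinearIndependent R b
  have hbound : ∀ m, P m → m ≤ (Module.rank R A).toNat := by
    rintro m ⟨b, -, -, hind⟩
    have h := hind.cardinal_lift_le_rank
    rw [Cardinal.mk_fin, Cardinal.lift_natCast] at h
    simpa using Cardinal.toNat_le_toNat h (Cardinal.lift_lt_aleph0.mpr hrank)
  obtain ⟨b, γ, hb, hind⟩ : P (Nat.findGreatest P (Module.rank R A).toNat) :=
    Nat.findGreatest_spec (Nat.zero_le _)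
      ⟨Fin.elim0, Fin.elim0, Fin.rec0, linearIndependent_empty_type⟩
  have hspan : ∀ β, ∀ z ∈ 𝒜 β, z ∈ span R (Set.range b) := by
    intro β z hz
    by_contra hzb
    have hnext : P (Nat.findGreatest P (Module.rank R A).toNat + 1) :=
      ⟨Fin.cons z b, Fin.cons β γ, Fin.cases hz hb, hR.linearIndependent_finCons hb hind hz hzb⟩
    exact Nat.findGreatest_is_greatest (Nat.lt_succ_self _) (hbound _ hnext) hnext
  refine ⟨_, Module.Basis.mk hind fun x _ => ?_, γ, fun i => ?_⟩
  · rw [← sum_support_decompose 𝒜 x]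
    exact sum_mem fun β _ => hspan β _ (SetLike.coe_mem _)
  · rw [Module.Basis.mk_apply]
    exact hb i

end GradedDivisionSubring

theorem LinearMap.coe_det_eq_det_of_apply_basis {A : Type*} [CommRing A] {R : Subring A}
    {ι : Type*} [Fintype ι] [DecidableEq ι] (B : Module.Basis ι R A) (f : A →ₗ[R] A)
    (M : Matrix ι ι A) (hM : ∀ i j, M i j ∈ R) (hf : ∀ j, f (B j) = ∑ i, M i j * B i) :
    ((LinearMap.det f : R) : A) = M.det := by
  let M' : Matrix ι ι R := Matrix.of fun i j => ⟨M i j, hM i j⟩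
  have hfM : LinearMap.toMatrix B B f = M' := by
    refine Matrix.ext fun i j => ?_
    rw [LinearMap.toMatrix_apply, hf j]
    exact congrFun (B.repr_sum_self fun i => M' i j) i
  rw [← LinearMap.det_toMatrix B, hfM]
  exact RingHom.map_det R.subtype M'

section Closure

open DirectSum

variable {Γ : Type*} [AddCommGroup Γ] [LinearOrder Γ] [IsOrderedAddMonoid Γ] [DecidableEq Γ]
  {F K gK : Type*} [Field F] [Field K] [Algebra F K] [CommRing gK]
  {v : K → WithTop Γ} {𝒦 : Γ → AddSubgroup gK} {tilde : K → gK}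

def HasBaseComponents (F : Type*) [Field F] [Algebra F K] (v : K → WithTop Γ)
    (𝒦 : Γ → AddSubgroup gK) [GradedRing 𝒦] (tilde : K → gK) (x : gK) : Prop :=
  ∀ β : Γ, ∃ c : F, (β : WithTop Γ) ≤ v (algebraMap F K c) ∧
    (decompose 𝒦 x β : gK) = degPart v tilde β (algebraMap F K c)

variable [GradedRing 𝒦]

theorem hasBaseComponents_zero (hv : IsValn v) : HasBaseComponents F v 𝒦 tilde 0 := fun β =>
  ⟨0, by rw [map_zero, hv.map_zero]; exact le_top,
    by rw [decompose_zero, map_zero, degPart_zero hv]; rfl⟩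

theorem hasBaseComponents_tilde (hv : IsValn v) (hgr : IsAssocGraded v 𝒦 tilde) (c : F) :
    HasBaseComponents F v 𝒦 tilde (tilde (algebraMap F K c)) := by
  intro β
  rw [hgr.decompose_tilde hv]
  by_cases hc : (β : WithTop Γ) ≤ v (algebraMap F K c)
  · exact ⟨c, hc, rfl⟩
  · rw [degPart_of_ne fun h => hc h.ge]
    simpa using hasBaseComponents_zero (F := F) (𝒦 := 𝒦) (tilde := tilde) hv β

theorem HasBaseComponents.add (hv : IsValn v) (hgr : IsAssocGraded v 𝒦 tilde) {x y : gK}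
    (hx : HasBaseComponents F v 𝒦 tilde x) (hy : HasBaseComponents F v 𝒦 tilde y) :
    HasBaseComponents F v 𝒦 tilde (x + y) := by
  intro β
  obtain ⟨c, hc, hxc⟩ := hx β
  obtain ⟨c', hc', hyc'⟩ := hy β
  refine ⟨c + c', ?_, ?_⟩
  · rw [map_add]
    exact (le_min hc hc').trans (hv.add_ge _ _)
  · rw [decompose_add, DirectSum.add_apply, AddSubgroup.coe_add, hxc, hyc', map_add,
      hgr.degPart_add hv hc hc']

theorem HasBaseComponents.neg (hv : IsValn v) (hgr : IsAssocGraded v 𝒦 tilde) {x : gK}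
    (hx : HasBaseComponents F v 𝒦 tilde x) : HasBaseComponents F v 𝒦 tilde (-x) := by
  intro β
  obtain ⟨c, hc, hxc⟩ := hx β
  refine ⟨-c, by rwa [map_neg, hv.map_neg], ?_⟩
  rw [decompose_neg, DFinsupp.neg_apply, AddSubgroup.coe_neg, hxc, map_neg, hgr.degPart_neg hv]

theorem HasBaseComponents.mul (hv : IsValn v) (hgr : IsAssocGraded v 𝒦 tilde) {x y : gK}
    (hx : HasBaseComponents F v 𝒦 tilde x) (hy : HasBaseComponents F v 𝒦 tilde y) :
    HasBaseComponents F v 𝒦 tilde (x * y) := by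
  classical
  intro β
  choose cx hcx hxc using hx
  choose cy hcy hyc using hy
  have hterm : ∀ γ, (β : WithTop Γ) ≤ v (algebraMap F K (cx γ * cy (β - γ))) := fun γ => by
    have h := add_le_add (hcx γ) (hcy (β - γ))
    rwa [← WithTop.coe_add, add_sub_cancel, ← hv.map_mul, ← map_mul] at h
  refine ⟨∑ γ ∈ (decompose 𝒦 x).support, cx γ * cy (β - γ), ?_, ?_⟩
  · rw [map_sum]
    exact hv.le_map_sum fun γ _ => hterm γ
  have hxy : x * y = ∑ γ ∈ (decompose 𝒦 x).support, (decompose 𝒦 x γ : gK) * y := by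
    rw [← Finset.sum_mul, sum_support_decompose]
  rw [map_sum, hgr.degPart_sum hv fun γ _ => hterm γ, hxy, decompose_sum,
    DFinsupp.finsetSum_apply, AddSubgroup.val_finsetSum]
  refine Finset.sum_congr rfl fun γ _ => ?_
  have hdec := coe_decompose_mul_add_of_left_mem 𝒦 (b := y) (j := β - γ)
    (SetLike.coe_mem (decompose 𝒦 x γ))
  have hdeg := hgr.degPart_mul hv (hcx γ) (hcy (β - γ))
  rw [add_sub_cancel] at hdec hdeg
  rw [hdec, hxc, hyc, map_mul, hdeg]

theorem hasBaseComponents_of_mem_closure (hv : IsValn v) (hgr : IsAssocGraded v 𝒦 tilde)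
    {r : gK} (hr : r ∈ Subring.closure (Set.range fun c : F => tilde (algebraMap F K c))) :
    HasBaseComponents F v 𝒦 tilde r := by
  induction hr using Subring.closure_induction with
  | mem x hx =>
    obtain ⟨c, rfl⟩ := hx
    exact hasBaseComponents_tilde hv hgr c
  | zero => exact hasBaseComponents_zero hv
  | one =>
    rw [← hgr.map_one, ← map_one (algebraMap F K)]
    exact hasBaseComponents_tilde hv hgr 1
  | add x y _ _ hx hy => exact hx.add hv hgr hy
  | neg x _ hx => exact hx.neg hv hgr
  | mul x y _ _ hx hy => exact hx.mul hv hgr hy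

theorem isGradedDivisionSubring_closure (hv : IsValn v)
    (hgr : IsAssocGraded v 𝒦 tilde) :
    IsGradedDivisionSubring 𝒦 (Subring.closure (Set.range fun c : F => tilde (algebraMap F K c)))
    where
  decompose_mem r hr β := by
    obtain ⟨c, -, hc⟩ := hasBaseComponents_of_mem_closure hv hgr hr β
    rw [hc]
    exact degPart_mem_of_mem (Subring.subset_closure ⟨c, rfl⟩)
  exists_inv_mul γ r hr hrγ hr0 := by
    obtain ⟨c, -, hc⟩ := hasBaseComponents_of_mem_closure hv hgr hr γ
    rw [decompose_of_mem_same 𝒦 hrγ] at hc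
    have hvc := eq_of_degPart_ne_zero (hc ▸ hr0)
    rw [degPart_of_eq hvc] at hc
    have hc0 : c ≠ 0 := (map_ne_zero _).mp (hv.ne_zero_of_eq_coe hvc)
    refine ⟨tilde (algebraMap F K c⁻¹), Subring.subset_closure ⟨c⁻¹, rfl⟩, ?_⟩
    rw [hc, ← hgr.map_mul, ← map_mul, inv_mul_cancel₀ hc0, map_one, hgr.map_one]

end Closure

section Splitting

variable {Γ : Type*} [AddCommGroup Γ] [LinearOrder Γ] [IsOrderedAddMonoid Γ]
  {F K gK : Type*} [Field F] [Field K] [Algebra F K] [CommRing gK]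
  {v : K → WithTop Γ} {𝒦 : Γ → AddSubgroup gK} {tilde : K → gK} {R : Subring gK}
  {ι : Type*} [Fintype ι] {e : ι → K} {γ : ι → Γ}

theorem map_sum_smul_le_of_linearIndependent (hv : IsValn v) (hgr : IsAssocGraded v 𝒦 tilde)
    (hR : ∀ c : F, tilde (algebraMap F K c) ∈ R) (he : ∀ i, v (e i) = γ i)
    (hind : LinearIndependent R fun i => tilde (e i)) (c : ι → F) (i : ι) :
    v (∑ j, c j • e j) ≤ v (c i • e i) := by
  by_contra! hlt
  obtain ⟨i₀, -, hmin⟩ := Finset.exists_min_image Finset.univ (fun j => v (c j • e j))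
    ⟨i, Finset.mem_univ i⟩
  obtain ⟨μ, hμ⟩ := WithTop.ne_top_iff_exists.mp ((hmin i (Finset.mem_univ i)).trans_lt hlt).ne_top
  have hterm : ∀ j, degPart v tilde (μ - γ j) (algebraMap F K (c j)) * tilde (e j) =
      degPart v tilde μ (c j • e j) := by
    intro j
    have hle : (μ : WithTop Γ) ≤ v (algebraMap F K (c j)) + γ j := by
      rw [hμ, ← he j, ← hv.map_mul, ← Algebra.smul_def]
      exact hmin j (Finset.mem_univ j)
    rw [Algebra.smul_def, hgr.degPart_mul_of_eq hv (WithTop.coe_sub_le_of_le_add hle) (he j)]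
  have hrel : ∑ j, (⟨degPart v tilde (μ - γ j) (algebraMap F K (c j)),
      degPart_mem_of_mem (hR (c j))⟩ : R) • tilde (e j) = 0 := by
    calc _ = ∑ j, degPart v tilde μ (c j • e j) := Finset.sum_congr rfl fun j _ => hterm j
      _ = degPart v tilde μ (∑ j, c j • e j) :=
        (hgr.degPart_sum hv fun j _ => hμ ▸ hmin j (Finset.mem_univ j)).symm
      _ = 0 := degPart_of_lt (hμ ▸ (hmin i (Finset.mem_univ i)).trans_lt hlt)
  have hcoef := congrArg Subtype.val (Fintype.linearIndependent_iff.mp hind _ hrel i₀)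
  have hne : c i₀ • e i₀ ≠ 0 := hv.ne_zero_of_eq_coe hμ.symm
  refine hgr.ne_zero _ hne ?_
  rw [← degPart_of_eq (tilde := tilde) hμ.symm, ← hterm i₀]
  exact (congrArg (· * tilde (e i₀)) hcoef).trans (zero_mul _)

theorem linearIndependent_of_linearIndependent_tilde (hv : IsValn v)
    (hgr : IsAssocGraded v 𝒦 tilde) (hR : ∀ c : F, tilde (algebraMap F K c) ∈ R)
    (he : ∀ i, v (e i) = γ i) (hind : LinearIndependent R fun i => tilde (e i)) :
    LinearIndependent F e := by
  refine Fintype.linearIndependent_iff.mpr fun c hc i => ?_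
  have h := map_sum_smul_le_of_linearIndependent hv hgr hR he hind c i
  rw [hc, hv.map_zero, top_le_iff] at h
  exact (smul_eq_zero.mp (hv.eq_zero_of_eq_top h)).resolve_right (hv.ne_zero_of_eq_coe (he i))

end Splitting

theorem Algebra.sum_leftMulMatrix_smul {F K ι : Type*} [CommRing F] [Ring K] [Algebra F K]
    [Fintype ι] [DecidableEq ι] (b : Module.Basis ι F K) (x : K) (j : ι) :
    ∑ i, Algebra.leftMulMatrix b x i j • b i = x * b j := by
  simp only [Algebra.leftMulMatrix_eq_repr_mul, b.sum_repr]

section LeadingTermOfNorm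

variable {Γ : Type*} [AddCommGroup Γ] [LinearOrder Γ] [IsOrderedAddMonoid Γ]
  {F K gK : Type*} [Field F] [Field K] [Algebra F K] [CommRing gK]
  {v : K → WithTop Γ} {𝒦 : Γ → AddSubgroup gK} {tilde : K → gK} {R : Subring gK}
  {ι : Type*} [Fintype ι] [DecidableEq ι] {b : Module.Basis ι F K} {γ : ι → Γ} {a : K} {α : Γ}

theorem coe_sub_le_map_leftMulMatrix (hv : IsValn v) (hgr : IsAssocGraded v 𝒦 tilde)
    (hR : ∀ c : F, tilde (algebraMap F K c) ∈ R) (hb : ∀ i, v (b i) = γ i)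
    (hind : LinearIndependent R fun i => tilde (b i)) (ha : v a = α) (i j : ι) :
    ((α + γ j - γ i : Γ) : WithTop Γ) ≤ v (algebraMap F K (Algebra.leftMulMatrix b a i j)) := by
  have h := map_sum_smul_le_of_linearIndependent hv hgr hR hb hind
    (fun i => Algebra.leftMulMatrix b a i j) i
  rw [Algebra.sum_leftMulMatrix_smul, hv.map_mul, ha, hb j, Algebra.smul_def, hv.map_mul,
    hb i] at h
  exact WithTop.coe_sub_le_of_le_add (by rwa [WithTop.coe_add])

theorem tilde_mul_eq_sum_degPart (hv : IsValn v) (hgr : IsAssocGraded v 𝒦 tilde)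
    (hb : ∀ i, v (b i) = γ i) (ha : v a = α)
    (hC : ∀ i j, ((α + γ j - γ i : Γ) : WithTop Γ) ≤
      v (algebraMap F K (Algebra.leftMulMatrix b a i j))) (j : ι) :
    tilde a * tilde (b j) = ∑ i, degPart v tilde (α + γ j - γ i)
      (algebraMap F K (Algebra.leftMulMatrix b a i j)) * tilde (b i) := by
  have hvj : v (a * b j) = ((α + γ j : Γ) : WithTop Γ) := by
    rw [hv.map_mul, ha, hb j, WithTop.coe_add]
  rw [← hgr.map_mul, ← degPart_of_eq (tilde := tilde) hvj, ← Algebra.sum_leftMulMatrix_smul,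
    hgr.degPart_sum hv fun i _ => ?_]
  · refine Finset.sum_congr rfl fun i _ => ?_
    rw [Algebra.smul_def, hgr.degPart_mul_of_eq hv (hC i j) (hb i)]
  · rw [Algebra.smul_def, hv.map_mul, hb i, ← sub_add_cancel (α + γ j) (γ i), WithTop.coe_add]
    exact add_le_add_left (hC i j) _

theorem tilde_algebraMap_norm_eq_det_mulLeft [Nontrivial gK] (hv : IsValn v)
    (hgr : IsAssocGraded v 𝒦 tilde) (hR : ∀ c : F, tilde (algebraMap F K c) ∈ R)
    (hb : ∀ i, v (b i) = γ i) (B : Module.Basis ι R gK) (hB : ∀ i, B i = tilde (b i))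
    (ha : a ≠ 0) :
    tilde (algebraMap F K (Algebra.norm F a)) = LinearMap.det (LinearMap.mulLeft R (tilde a)) := by
  obtain ⟨α, hα⟩ := hv.exists_eq_coe ha
  have hC := coe_sub_le_map_leftMulMatrix hv hgr hR hb
    (by simpa only [← hB] using B.linearIndependent) hα
  set M := Matrix.of fun i j =>
    degPart v tilde (α + γ j - γ i) (algebraMap F K (Algebra.leftMulMatrix b a i j))
  have hdet : degPart v tilde (Fintype.card ι • α) (algebraMap F K (Algebra.norm F a)) = M.det := by
    rw [Algebra.norm_eq_matrix_det b, RingHom.map_det]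
    exact hgr.degPart_det hv _ α γ hC
  have hf : ((LinearMap.det (LinearMap.mulLeft R (tilde a)) : R) : gK) = M.det :=
    LinearMap.coe_det_eq_det_of_apply_basis B _ M (fun i j => degPart_mem_of_mem (hR _))
      fun j => by
        simpa only [hB, M, Matrix.of_apply, LinearMap.mulLeft_apply] using
          tilde_mul_eq_sum_degPart hv hgr hb hα hC j
  have hunit : IsUnit (LinearMap.det (LinearMap.mulLeft R (tilde a))) := by
    have h : tilde a * tilde a⁻¹ = 1 := by rw [← hgr.map_mul, mul_inv_cancel₀ ha, hgr.map_one]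
    exact (IsUnit.of_mul_eq_one _ h).map (Algebra.norm R)
  have hne : degPart v tilde (Fintype.card ι • α) (algebraMap F K (Algebra.norm F a)) ≠ 0 := by
    rw [hdet, ← hf]
    exact (hunit.map R.subtype).ne_zero
  calc tilde (algebraMap F K (Algebra.norm F a))
      = degPart v tilde (Fintype.card ι • α) (algebraMap F K (Algebra.norm F a)) :=
        (degPart_of_eq (eq_of_degPart_ne_zero hne)).symm
    _ = _ := hdet.trans hf.symm

end LeadingTermOfNorm

theorem residue_of_norm_eq_graded_norm_of_defectless_general
    {Γ : Type} [AddCommGroup Γ] [LinearOrder Γ] [IsOrderedAddMonoid Γ] [DecidableEq Γ]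
    {F : Type} [Field F] {K : Type} [Field K] [Algebra F K]
    [Module.Finite F K]
    (v : K → WithTop Γ) (hv : IsValn v)
    -- the associated graded field `gr(K)` and, inside it, `gr(F)`
    {gK : Type} [CommRing gK] (𝒦 : Γ → AddSubgroup gK) [GradedRing 𝒦]
    (tilde : K → gK) (hgr : IsAssocGraded v 𝒦 tilde)
    -- `K` is defectless over `F`: `[K:F] = [K̄:F̄]·|Γ_K:Γ_F| = [gr(K):gr(F)]`
    (hdefectless :
      Module.finrank (Subring.closure (Set.range fun c : F => tilde (algebraMap F K c)))
        gK = Module.finrank F K) :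
    ∀ a : K, a ≠ 0 →
      ∃ f : gK →ₗ[Subring.closure (Set.range fun c : F => tilde (algebraMap F K c))] gK,
        (∀ x : gK, f x = tilde a * x) ∧
        tilde (algebraMap F K (Algebra.norm F a)) = LinearMap.det f := by
  intro a ha
  set R := Subring.closure (Set.range fun c : F => tilde (algebraMap F K c))
  have hR : ∀ c : F, tilde (algebraMap F K c) ∈ R := fun c => Subring.subset_closure ⟨c, rfl⟩
  have := hgr.nontrivial
  have hpos : 0 < Module.finrank R gK := hdefectless ▸ Module.finrank_pos
  obtain ⟨m, B, γ, hB⟩ :=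
    (isGradedDivisionSubring_closure hv hgr).exists_basis_homogeneous (Cardinal.toNat_pos.mp hpos).2
  choose e he heB using fun i => hgr.surj (γ i) (B i) (hB i) (B.ne_zero i)
  have hcard : Fintype.card (Fin m) = Module.finrank F K := by
    rw [← hdefectless, Module.finrank_eq_card_basis B]
  have : Nonempty (Fin m) :=
    Fin.pos_iff_nonempty.mp (by rw [← Fintype.card_fin m, hcard]; exact Module.finrank_pos)
  have hind := linearIndependent_of_linearIndependent_tilde hv hgr hR he
    (by simpa only [heB] using B.linearIndependent)
  refine ⟨LinearMap.mulLeft _ (tilde a), fun x => rfl, ?_⟩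
  exact tilde_algebraMap_norm_eq_det_mulLeft
    (b := basisOfLinearIndependentOfCardEqFinrank hind hcard) hv hgr hR (by simpa using he) B
    (by simpa using fun i => (heB i).symm) ha

/-- Let `F ⊆ K` be fields with `[K:F] < ∞`, `v` a henselian valuation on
`F`, and suppose `K` (with the unique extension of `v`) is defectless over `F`
(equivalently, by the fundamental equality
`[gr(K):gr(F)] = [K̄:F̄]·|Γ_K:Γ_F|`, that `[K:F] = [gr(K):gr(F)]`).  Then for every
`a ∈ K*`, the image of `N_{K/F}(a)` in `gr(F)` equals `N_{gr(K)/gr(F)}(ã)`, the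
determinant of multiplication by `ã` on the `gr(F)`-module `gr(K)`. -/
theorem residue_of_norm_eq_graded_norm_of_defectless
    {Γ : Type} [AddCommGroup Γ] [LinearOrder Γ] [IsOrderedAddMonoid Γ] [DecidableEq Γ]
    {F : Type} [Field F] {K : Type} [Field K] [Algebra F K]
    [Module.Finite F K]
    (v : K → WithTop Γ) (hv : IsValn v)
    (hhens : ∀ V : Subring F, (∀ x : F, x ∈ V ↔ 0 ≤ v (algebraMap F K x)) →
      HenselianLocalRing V)
    -- the associated graded field `gr(K)` and, inside it, `gr(F)`
    {gK : Type} [CommRing gK] (𝒦 : Γ → AddSubgroup gK) [GradedRing 𝒦]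
    (tilde : K → gK) (hgr : IsAssocGraded v 𝒦 tilde)
    -- `K` is defectless over `F`: `[K:F] = [K̄:F̄]·|Γ_K:Γ_F| = [gr(K):gr(F)]`
    (hdefectless :
      Module.finrank (Subring.closure (Set.range fun c : F => tilde (algebraMap F K c)))
        gK = Module.finrank F K) :
    ∀ a : K, a ≠ 0 →
      ∃ f : gK →ₗ[Subring.closure (Set.range fun c : F => tilde (algebraMap F K c))] gK,
        (∀ x : gK, f x = tilde a * x) ∧
        tilde (algebraMap F K (Algebra.norm F a)) = LinearMap.det f :=
  residue_of_norm_eq_graded_norm_of_defectless_general v hv 𝒦 tilde hgr hdefectless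
end
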